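/- Let n ≥ 2 and let f = f₁^{k₁}⋯f_r^{k_r} ∈ R with r ≥ 2, where f₁,…,f_r are pairwise non-associated irreducible elements and k₁,…,k_r ≥ 1. Then the principal ideal (f) is not a Tjurina ideal. -/

import Mathlib

/-!
If `(F) = T(g)`, then `g = a F` and the Leibniz rule gives `F ∣ a ∂ⱼF` for every `j`. Some `∂ⱼF`
has order exactly `ord F - 1`, which forces `ord a ≥ 1`; and if `ord a ≥ 2`, every generator of
`T(aF)` has order `> ord F`, so `F ∉ T(aF)`. Hence `ord a = 1`, and a series of order one is prime:
seen as a power series in a variable in which it has a linear term, it has Weierstrass degree one,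
so the quotient by it is the power series ring in the other variables. The divisibility
`F ∣ a ∇F` passes from `F` to `F / a`, so dividing repeatedly gives `F = aᵐ · unit`. Thus every
irreducible factor of `F` is associated to `a`, and `F` cannot have two non-associated ones.
-/

/-- The partial derivative `∂f/∂xⱼ` of a formal power series `f ∈ ℂ[[x₁,…,xₙ]]`,
defined coefficientwise. -/
noncomputable def pd {n : ℕ} (j : Fin n) (f : MvPowerSeries (Fin n) ℂ) :
    MvPowerSeries (Fin n) ℂ :=
  fun d => ((d j + 1 : ℕ) : ℂ) * MvPowerSeries.coeff (d + Finsupp.single j 1) f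

/-- The Tjurina ideal `T(f) = (f, ∂f/∂x₁, …, ∂f/∂xₙ)`. -/
noncomputable def Tj {n : ℕ} (f : MvPowerSeries (Fin n) ℂ) : Ideal (MvPowerSeries (Fin n) ℂ) :=
  Ideal.span ({f} ∪ Set.range fun j => pd j f)

/-- The set of antiderivatives `Δ(I) = {f : T(f) ⊆ I}`. -/
def Del {n : ℕ} (I : Ideal (MvPowerSeries (Fin n) ℂ)) : Set (MvPowerSeries (Fin n) ℂ) :=
  {f | Tj f ≤ I}

/-- The Tjurina ideal of an arbitrary set of power series (for an ideal `J`, applied to its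
carrier this computes `T(J) = T(g₁) + … + T(g_q)` for any system of generators). -/
noncomputable def Tset {n : ℕ} (A : Set (MvPowerSeries (Fin n) ℂ)) :
    Ideal (MvPowerSeries (Fin n) ℂ) :=
  Ideal.span (A ∪ {g | ∃ f ∈ A, ∃ j, g = pd j f})

/-- The maximal ideal `𝔪 = (x₁,…,xₙ)` of `ℂ[[x₁,…,xₙ]]`. -/
noncomputable def mm (n : ℕ) : Ideal (MvPowerSeries (Fin n) ℂ) :=
  Ideal.span (Set.range (MvPowerSeries.X : Fin n → MvPowerSeries (Fin n) ℂ))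

open IsLocalRing MvPowerSeries

namespace Finsupp

theorem exists_eq_single_of_degree_eq_one {σ : Type*} {d : σ →₀ ℕ} (hd : d.degree = 1) :
    ∃ j, d = single j 1 := by
  obtain ⟨j, hj⟩ := ne_iff.mp (show d ≠ 0 by rintro rfl; simp at hd)
  have hle : single j 1 ≤ d := single_le_iff.mpr (Nat.one_le_iff_ne_zero.mpr hj)
  have h0 : (d - single j 1).degree = 0 := by
    have := congrArg degree (tsub_add_cancel_of_le hle)
    rw [map_add, degree_single, hd] at this
    omega
  exact ⟨j, by rw [← tsub_add_cancel_of_le hle, (degree_eq_zero_iff _).mp h0, zero_add]⟩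

end Finsupp

theorem Prime.associated_of_irreducible_dvd_pow_mul {M : Type*} [CommMonoidWithZero M]
    [IsCancelMulZero M] {p q u : M} {m : ℕ} (hp : Prime p) (hq : Irreducible q) (hu : IsUnit u)
    (h : q ∣ p ^ m * u) : Associated p q := by
  obtain ⟨i, -, hi⟩ := (dvd_prime_pow hp m).mp (hu.dvd_mul_right.mp h)
  obtain _ | i := i
  · exact absurd (hi.symm.isUnit (by rw [pow_zero]; exact isUnit_one)) hq.not_isUnit
  · exact hp.irreducible.associated_of_dvd hq ((dvd_pow_self p i.succ_ne_zero).trans hi.symm.dvd)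

theorem PowerSeries.prime_of_order_map_residue_eq_one {A : Type*} [CommRing A] [IsDomain A]
    [IsLocalRing A] [IsAdicComplete (maximalIdeal A) A] {g : PowerSeries A}
    (hg : (g.map (residue A)).order = 1) : Prime g := by
  have hg0 : g.map (residue A) ≠ 0 := fun h => by simp [h] at hg
  have H := isWeierstrassFactorization_weierstrassDistinguished_weierstrassUnit hg0
  have hdeg : (g.weierstrassDistinguished hg0).natDegree = 1 := by
    rw [H.natDegree_eq_toNat_order_map, hg]; rfl
  have hf := H.isDistinguishedAt.monic.eq_X_add_C hdeg
  rw [← sub_neg_eq_add, ← map_neg] at hf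
  have e : (PowerSeries A ⧸ Ideal.span {g}) ≃+* A := by
    refine H.algEquivQuotient.symm.toRingEquiv.trans ?_
    rw [hf]
    exact (Polynomial.quotientSpanXSubCAlgEquiv _).toRingEquiv
  have : IsDomain (PowerSeries A ⧸ Ideal.span {g}) := e.toMulEquiv.isDomain A
  rwa [← Ideal.span_singleton_prime (fun h => hg0 (by simp [h])),
    ← Ideal.Quotient.isDomain_iff_prime]

namespace MvPowerSeries

variable {σ R K : Type*}

theorem mem_span_range_X_of_constantCoeff_eq_zero [Finite σ] [CommSemiring R]
    {φ : MvPowerSeries σ R} (hφ : constantCoeff φ = 0) : φ ∈ Ideal.span (Set.range X) := by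
  classical
  cases nonempty_fintype σ
  rcases isEmpty_or_nonempty σ with hσ | hσ
  · convert Ideal.zero_mem _
    ext d
    rw [Subsingleton.elim d 0, coeff_zero_eq_constantCoeff_apply, hφ, map_zero]
  -- `φ = ∑ i, X i * ψ i`, where `ψ i` collects the monomials `d ≠ 0` of `φ` with `ι d = i`
  let ι : (σ →₀ ℕ) → σ := fun d => Classical.epsilon fun i => d i ≠ 0
  have hι : ∀ d : σ →₀ ℕ, d ≠ 0 → d (ι d) ≠ 0 := fun d hd =>
    Classical.epsilon_spec (Finsupp.ne_iff.mp hd)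
  let ψ : σ → MvPowerSeries σ R := fun i e =>
    if ι (e + Finsupp.single i 1) = i then coeff (e + Finsupp.single i 1) φ else 0
  have coeff_ψ : ∀ i e, coeff e (ψ i) =
      if ι (e + Finsupp.single i 1) = i then coeff (e + Finsupp.single i 1) φ else 0 :=
    fun _ _ => rfl
  refine (Submodule.mem_span_range_iff_exists_fun _).mpr ⟨ψ, ?_⟩
  ext d
  simp_rw [smul_eq_mul, map_sum, X_def, coeff_mul_monomial, mul_one, coeff_ψ]
  rcases eq_or_ne d 0 with rfl | hd
  · simp [hφ]
  rw [Finset.sum_eq_single (ι d)]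
  · have hle : Finsupp.single (ι d) 1 ≤ d :=
      Finsupp.single_le_iff.mpr (Nat.one_le_iff_ne_zero.mpr (hι d hd))
    rw [if_pos hle, tsub_add_cancel_of_le hle, if_pos rfl]
  · intro i _ hi
    split_ifs with hle h
    · rw [tsub_add_cancel_of_le hle] at h
      exact absurd h.symm hi
    all_goals rfl
  · exact fun h => absurd (Finset.mem_univ _) h

theorem mem_maximalIdeal_iff_constantCoeff_eq_zero [Field K] {φ : MvPowerSeries σ K} :
    φ ∈ maximalIdeal (MvPowerSeries σ K) ↔ constantCoeff φ = 0 := by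
  rw [mem_maximalIdeal, mem_nonunits_iff, isUnit_iff_constantCoeff, isUnit_iff_ne_zero, not_not]

theorem maximalIdeal_eq_span_range_X [Finite σ] [Field K] :
    maximalIdeal (MvPowerSeries σ K) = Ideal.span (Set.range X) := by
  refine le_antisymm (fun φ hφ => mem_span_range_X_of_constantCoeff_eq_zero
    (mem_maximalIdeal_iff_constantCoeff_eq_zero.mp hφ)) ?_
  rw [Ideal.span_le]
  rintro _ ⟨i, rfl⟩
  exact mem_maximalIdeal_iff_constantCoeff_eq_zero.mpr (constantCoeff_X i)

instance [Finite σ] [Field K] :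
    IsAdicComplete (maximalIdeal (MvPowerSeries σ K)) (MvPowerSeries σ K) := by
  rw [maximalIdeal_eq_span_range_X]
  infer_instance

theorem prime_of_order_eq_one [Finite σ] [Field K] {a : MvPowerSeries σ K} (ha : a.order = 1) :
    Prime a := by
  classical
  obtain ⟨⟨d, hd, hdeg⟩, hlow⟩ := order_eq_nat.mp (show a.order = (1 : ℕ) from ha)
  obtain ⟨j, rfl⟩ := Finsupp.exists_eq_single_of_degree_eq_one hdeg
  have := NoZeroDivisors.to_isDomain (MvPowerSeries {i // i ≠ j} K)
  -- view `a` as a power series in `X j` over the power series in the other variables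
  let e : σ ≃ Option {i // i ≠ j} := (Equiv.optionSubtypeNe j).symm
  let Φ := (renameEquiv K e).trans (optionEquivLeft {i // i ≠ j} K)
  have hΦ : ∀ k, constantCoeff (PowerSeries.coeff k (Φ a)) = coeff (Finsupp.single j k) a := by
    intro k
    have : Finsupp.optionElim k 0 = Finsupp.embDomain e.toEmbedding (Finsupp.single j k) := by
      rw [Finsupp.optionElim_zero, Finsupp.embDomain_single]
      simp [e]
    rw [← coeff_zero_eq_constantCoeff_apply]
    simp only [Φ, AlgEquiv.trans_apply, coeff_coeff_optionEquivLeft, this]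
    exact coeff_embDomain_rename _ _ _
  have hΦa : (PowerSeries.map (residue _) (Φ a)).order = (1 : ℕ) := by
    simp only [PowerSeries.order_eq_nat, PowerSeries.coeff_map, ne_eq, residue_eq_zero_iff,
      mem_maximalIdeal_iff_constantCoeff_eq_zero, hΦ, Nat.lt_one_iff, forall_eq,
      Finsupp.single_zero]
    exact ⟨hd, hlow 0 (by simp)⟩
  exact (MulEquiv.prime_iff Φ.toMulEquiv).mp (PowerSeries.prime_of_order_map_residue_eq_one hΦa)

theorem le_order_of_mem_span [CommSemiring R] {S : Set (MvPowerSeries σ R)} {n : ℕ∞}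
    (hS : ∀ s ∈ S, n ≤ s.order) {x : MvPowerSeries σ R} (hx : x ∈ Ideal.span S) :
    n ≤ x.order := by
  induction hx using Submodule.span_induction with
  | mem s hs => exact hS s hs
  | zero => simp
  | add x y _ _ hx hy => exact (le_min hx hy).trans min_order_le_add
  | smul c x _ hx => exact hx.trans (le_add_self.trans le_order_mul)

theorem order_le_order_pderiv_add_one [CommSemiring R] (i : σ) (f : MvPowerSeries σ R) :
    f.order ≤ (pderiv R i f).order + 1 := by
  rcases eq_or_ne (pderiv R i f) 0 with h | h
  · simp [h]
  obtain ⟨d, hd, hdeg⟩ := exists_coeff_ne_zero_and_order (ne_zero_iff_order_finite.mp h)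
  rw [coeff_pderiv] at hd
  calc f.order ≤ (d + Finsupp.single i 1).degree := order_le (left_ne_zero_of_mul hd)
    _ = (pderiv R i f).order + 1 := by
      rw [map_add, Finsupp.degree_single, ← hdeg]; push_cast; rfl

theorem exists_order_pderiv_add_one_eq [CommSemiring R] [NoZeroDivisors R] [CharZero R]
    {f : MvPowerSeries σ R} (hf : f ≠ 0) (hcc : constantCoeff f = 0) :
    ∃ i, (pderiv R i f).order + 1 = f.order := by
  obtain ⟨d, hd, hdeg⟩ := exists_coeff_ne_zero_and_order (ne_zero_iff_order_finite.mp hf)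
  obtain ⟨i, hi⟩ := Finsupp.ne_iff.mp (show d ≠ 0 by rintro rfl; exact hd (by simpa using hcc))
  have hle : Finsupp.single i 1 ≤ d := Finsupp.single_le_iff.mpr (Nat.one_le_iff_ne_zero.mpr hi)
  have hcoeff : coeff (d - Finsupp.single i 1) (pderiv R i f) ≠ 0 := by
    rw [coeff_pderiv, tsub_add_cancel_of_le hle]
    exact mul_ne_zero hd (Nat.cast_add_one_ne_zero _)
  refine ⟨i, le_antisymm ?_ (order_le_order_pderiv_add_one i f)⟩
  calc (pderiv R i f).order + 1 ≤ (d - Finsupp.single i 1).degree + 1 := by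
        gcongr; exact order_le hcoeff
    _ = f.order := by
      rw [← hdeg, ← tsub_add_cancel_of_le hle, map_add, Finsupp.degree_single,
        add_tsub_cancel_right]; push_cast; rfl

theorem dvd_mul_pderiv_of_mul_dvd_mul_pderiv [CommRing R] [NoZeroDivisors R]
    {a h : MvPowerSeries σ R} (ha : a ≠ 0) (i : σ)
    (hdvd : a * h ∣ a * pderiv R i (a * h)) : h ∣ a * pderiv R i h := by
  have := (mul_dvd_mul_iff_left ha).mp hdvd
  rw [Derivation.leibniz, smul_eq_mul, smul_eq_mul] at this
  exact (dvd_add_left (dvd_mul_right h _)).mp this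

section Field

variable [Field K] {a h : MvPowerSeries σ K}

theorem isUnit_iff_order_eq_zero : IsUnit h ↔ h.order = 0 := by
  rw [isUnit_iff_constantCoeff, isUnit_iff_ne_zero, ← not_iff_not, not_not, ← ne_eq,
    order_ne_zero_iff_constCoeff_eq_zero]

variable [CharZero K]

theorem exists_mul_pderiv_eq_mul_of_forall_dvd (hh : h ≠ 0) (hcc : constantCoeff h = 0)
    (hdvd : ∀ i, h ∣ a * pderiv K i h) :
    ∃ i q, a * pderiv K i h = h * q ∧ q.order + 1 = a.order := by
  obtain ⟨i, hi⟩ := exists_order_pderiv_add_one_eq hh hcc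
  obtain ⟨q, hq⟩ := hdvd i
  refine ⟨i, q, hq, ?_⟩
  have hfin : (pderiv K i h).order ≠ ⊤ :=
    (WithTop.add_ne_top.mp (hi ▸ order_eq_top_iff.not.mpr hh)).1
  have := congrArg order hq
  rw [order_mul, order_mul, ← hi, add_comm, add_assoc, add_comm 1] at this
  exact (WithTop.add_left_cancel hfin this).symm

theorem one_le_order_of_forall_dvd_mul_pderiv (hh : h ≠ 0) (hcc : constantCoeff h = 0)
    (hdvd : ∀ i, h ∣ a * pderiv K i h) : 1 ≤ a.order := by
  obtain ⟨i, q, -, hq⟩ := exists_mul_pderiv_eq_mul_of_forall_dvd hh hcc hdvd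
  exact hq ▸ le_add_self

theorem dvd_of_forall_dvd_mul_pderiv (ha : a.order = 1) (hh : h ≠ 0)
    (hcc : constantCoeff h = 0) (hdvd : ∀ i, h ∣ a * pderiv K i h) : a ∣ h := by
  obtain ⟨i, q, hq, hqa⟩ := exists_mul_pderiv_eq_mul_of_forall_dvd hh hcc hdvd
  have hqu : IsUnit q := isUnit_iff_order_eq_zero.mpr (by simpa [ha] using hqa)
  exact hqu.dvd_mul_right.mp (hq ▸ dvd_mul_right a _)

theorem exists_eq_pow_mul_of_forall_dvd_mul_pderiv (ha : a.order = 1) (hh : h ≠ 0)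
    (hdvd : ∀ i, h ∣ a * pderiv K i h) :
    ∃ (m : ℕ) (u : MvPowerSeries σ K), IsUnit u ∧ h = a ^ m * u := by
  obtain ⟨N, hN⟩ : ∃ N : ℕ, h.order = N := ⟨_, (ne_zero_iff_order_finite.mp hh).symm⟩
  induction N generalizing h with
  | zero => exact ⟨0, h, isUnit_iff_order_eq_zero.mpr hN, (one_mul h).symm⟩
  | succ N ih =>
    have hcc : constantCoeff h = 0 := order_ne_zero_iff_constCoeff_eq_zero.mp (by simp [hN])
    obtain ⟨h', rfl⟩ := dvd_of_forall_dvd_mul_pderiv ha hh hcc hdvd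
    have ha0 : a ≠ 0 := by rintro rfl; simp at ha
    have hN' : h'.order = N := by
      rw [order_mul, ha, add_comm, Nat.cast_succ] at hN
      exact WithTop.add_right_cancel ENat.one_ne_top hN
    obtain ⟨m, u, hu, rfl⟩ := ih (right_ne_zero_of_mul hh)
      (fun i => dvd_mul_pderiv_of_mul_dvd_mul_pderiv ha0 i (hdvd i)) hN'
    exact ⟨m + 1, u, hu, by ring⟩

end Field

end MvPowerSeries

section Tjurina

variable {n : ℕ}

theorem pd_eq_pderiv (j : Fin n) (f : MvPowerSeries (Fin n) ℂ) : pd j f = pderiv ℂ j f := by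
  ext d
  rw [coeff_pderiv, mul_comm, ← Nat.cast_succ]
  rfl

theorem Tj_eq_span_pderiv (g : MvPowerSeries (Fin n) ℂ) :
    Tj g = Ideal.span ({g} ∪ Set.range fun j => pderiv ℂ j g) := by
  simp only [Tj, pd_eq_pderiv]

theorem exists_eq_mul_of_span_singleton_eq_Tj {F g : MvPowerSeries (Fin n) ℂ}
    (h : Ideal.span {F} = Tj g) : ∃ a, g = a * F ∧ ∀ j, F ∣ a * pderiv ℂ j F := by
  have hdvd : ∀ x ∈ ({g} ∪ Set.range fun j => pderiv ℂ j g), F ∣ x := fun x hx =>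
    Ideal.mem_span_singleton.mp (h ▸ Tj_eq_span_pderiv g ▸ Ideal.subset_span hx)
  obtain ⟨a, rfl⟩ := hdvd g (Or.inl rfl)
  refine ⟨a, mul_comm F a, fun j => ?_⟩
  have : F ∣ pderiv ℂ j (F * a) := hdvd _ (Or.inr ⟨j, rfl⟩)
  rw [Derivation.leibniz, smul_eq_mul, smul_eq_mul] at this
  exact (dvd_add_right (dvd_mul_right F _)).mp this

theorem order_le_one_of_span_singleton_eq_Tj {F a : MvPowerSeries (Fin n) ℂ} (hF : F ≠ 0)
    (h : Ideal.span {F} = Tj (a * F)) : a.order ≤ 1 := by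
  by_contra! ha
  replace ha : 1 + 1 ≤ a.order := Order.add_one_le_of_lt ha
  have hgen : ∀ s ∈ ({a * F} ∪ Set.range fun j => pderiv ℂ j (a * F)),
      F.order + 1 ≤ s.order := by
    rintro s (rfl | ⟨j, rfl⟩)
    · calc F.order + 1 ≤ a.order + F.order := by
            rw [add_comm]; gcongr; exact le_self_add.trans ha
        _ ≤ (a * F).order := le_order_mul
    dsimp only
    rw [Derivation.leibniz, smul_eq_mul, smul_eq_mul]
    refine le_trans (le_min ?_ ?_) min_order_le_add
    · calc F.order + 1 ≤ (pderiv ℂ j F).order + 1 + 1 := by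
            gcongr; exact order_le_order_pderiv_add_one j F
        _ ≤ a.order + (pderiv ℂ j F).order := by rw [add_assoc, add_comm]; gcongr
        _ ≤ _ := le_order_mul
    · have : 1 ≤ (pderiv ℂ j a).order := (ENat.add_le_add_iff_right ENat.one_ne_top).mp
        (ha.trans (order_le_order_pderiv_add_one j a))
      calc F.order + 1 ≤ F.order + (pderiv ℂ j a).order := by gcongr
        _ ≤ _ := le_order_mul
  have hle := le_order_of_mem_span hgen (Tj_eq_span_pderiv _ ▸ h ▸ Ideal.mem_span_singleton_self F)
  exact lt_irrefl _ ((ENat.add_one_le_iff (order_eq_top_iff.not.mpr hF)).mp hle)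

end Tjurina

theorem stmt_13_general {n r : ℕ} (hr : 2 ≤ r) (f : Fin r → MvPowerSeries (Fin n) ℂ)
    (hirr : ∀ i, Irreducible (f i))
    (hassoc : ∀ i j, i ≠ j → ¬ Associated (f i) (f j))
    (k : Fin r → ℕ) (hk : ∀ i, 1 ≤ k i) :
    ¬ ∃ g : MvPowerSeries (Fin n) ℂ, Ideal.span {∏ i, f i ^ k i} = Tj g := by
  rintro ⟨g, hg⟩
  set F := ∏ i, f i ^ k i
  have hdvdF : ∀ i, f i ∣ F := fun i => (dvd_pow_self _ (Nat.pos_iff_ne_zero.mp (hk i))).trans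
    (Finset.dvd_prod_of_mem _ (Finset.mem_univ i))
  have hF0 : F ≠ 0 := Finset.prod_ne_zero_iff.mpr fun i _ => pow_ne_zero _ (hirr i).ne_zero
  have hFcc : constantCoeff F = 0 := by
    have : ¬ IsUnit F := fun hu =>
      (hirr ⟨0, by omega⟩).not_isUnit (isUnit_of_dvd_unit (hdvdF _) hu)
    rwa [isUnit_iff_order_eq_zero, ← ne_eq, order_ne_zero_iff_constCoeff_eq_zero] at this
  obtain ⟨a, rfl, hdvd⟩ := exists_eq_mul_of_span_singleton_eq_Tj hg
  have ha : a.order = 1 := le_antisymm (order_le_one_of_span_singleton_eq_Tj hF0 hg)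
    (one_le_order_of_forall_dvd_mul_pderiv hF0 hFcc hdvd)
  obtain ⟨m, u, hu, hFu⟩ := exists_eq_pow_mul_of_forall_dvd_mul_pderiv ha hF0 hdvd
  have hassoc_a : ∀ i, Associated a (f i) := fun i =>
    (prime_of_order_eq_one ha).associated_of_irreducible_dvd_pow_mul (hirr i) hu (hFu ▸ hdvdF i)
  exact hassoc ⟨0, by omega⟩ ⟨1, by omega⟩ (by simp [Fin.ext_iff])
    ((hassoc_a _).symm.trans (hassoc_a _))

/-- for `n ≥ 2` and `f = f₁^{k₁}⋯f_r^{k_r}` with `r ≥ 2` pairwise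
non-associated irreducible factors, `(f)` is not a Tjurina ideal. -/
theorem stmt_13 {n r : ℕ} (hn : 2 ≤ n) (hr : 2 ≤ r) (f : Fin r → MvPowerSeries (Fin n) ℂ)
    (hirr : ∀ i, Irreducible (f i))
    (hassoc : ∀ i j, i ≠ j → ¬ Associated (f i) (f j))
    (k : Fin r → ℕ) (hk : ∀ i, 1 ≤ k i) :
    ¬ ∃ g : MvPowerSeries (Fin n) ℂ, Ideal.span {∏ i, f i ^ k i} = Tj g :=
  stmt_13_general hr f hirr hassoc k hk
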